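/- Let p ∈ [1,∞) and suppose the equation −y′ + qy = f is correctly solvable in L_p(ℝ) (so that ∫_ℝ q = ∞ and d(x) is well-defined). Then d₀ := sup_{x∈ℝ} d(x) < ∞. -/

import Mathlib

open MeasureTheory Filter Topology
open scoped ENNReal

/-- `y` is a solution of `-y' + q y = f` on `ℝ`: it is locally absolutely
continuous and its a.e. derivative `y'` equals `q y - f`. -/
def IsSolution (q f y : ℝ → ℝ) : Prop :=
  LocallyIntegrable (fun t => q t * y t - f t) volume ∧
  ∀ a b : ℝ, y b - y a = ∫ t in a..b, (q t * y t - f t)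

/-- The equation `-y' + q y = f` is correctly solvable in `L_p(ℝ)`. -/
def CorrectlySolvableLp (q : ℝ → ℝ) (p : ℝ≥0∞) : Prop :=
  ∃ c : ℝ, 0 < c ∧ ∀ f : ℝ → ℝ, MemLp f p volume →
    (∃! y : ℝ → ℝ, IsSolution q f y ∧ MemLp y p volume) ∧
    ∀ y : ℝ → ℝ, IsSolution q f y → MemLp y p volume →
      eLpNorm y p volume ≤ ENNReal.ofReal c * eLpNorm f p volume

/-- The function `d(x) = inf { d > 0 : ∫_{x-d}^{x+d} q = 2 }`. -/
noncomputable def dq (q : ℝ → ℝ) (x : ℝ) : ℝ :=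
  sInf {d : ℝ | 0 < d ∧ ∫ t in x - d..x + d, q t = 2}

/-!
Suppose the window `[x - A, x + A]` carried `q`-mass below `2`. Let `f` be its indicator and `y`
the `L_p` solution, so `‖y‖_p ≤ c (2A)^{1/p}`; then on every subinterval of length `≥ A/2` the
function `|y|` drops below `5c` somewhere, say at `a ∈ [x - A, x - A/2]`. As `y' = q y - f ≤ q y`,
looking at the maximum of `y` shows that `y` at most doubles across a stretch of `q`-mass `≤ 1/2`,
so `y ≤ 80c` on `[a, x + A]`. There `y' ≤ 80c q - 1`, which forces `y ≤ -5c` on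
`[x + A/4, x + A]`: a contradiction once `A = 240c`. So every such window has mass `≥ 2`, and
`d(x) ≤ A` by the intermediate value theorem.
-/

open Set

theorem MeasureTheory.LocallyIntegrable.intervalIntegrable {f : ℝ → ℝ}
    (hf : LocallyIntegrable f volume) (a b : ℝ) : IntervalIntegrable f volume a b :=
  (hf.integrableOn_isCompact isCompact_uIcc).intervalIntegrable

namespace IsSolution

variable {q f y : ℝ → ℝ}

theorem continuous (h : IsSolution q f y) : Continuous y := by
  refine ((continuous_const (y := y 0)).add (intervalIntegral.continuous_primitive
    h.1.intervalIntegrable 0)).congr fun t => ?_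
  simp only [Pi.add_apply]
  linarith [h.2 0 t]

theorem sub_le_of_le (hq0 : ∀ t, 0 ≤ q t) (hq : LocallyIntegrable q volume)
    (h : IsSolution q f y) {a b K m : ℝ} (hab : a ≤ b) (hy : ∀ t ∈ Icc a b, y t ≤ K)
    (hf : ∀ t ∈ Icc a b, m ≤ f t) :
    y b - y a ≤ K * (∫ t in a..b, q t) - m * (b - a) := by
  rw [h.2 a b]
  calc ∫ t in a..b, (q t * y t - f t) ≤ ∫ t in a..b, (K * q t - m) := by
        refine intervalIntegral.integral_mono_on hab (h.1.intervalIntegrable a b)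
          (((hq.intervalIntegrable a b).const_mul K).sub intervalIntegrable_const) fun t ht => ?_
        nlinarith [hy t ht, hf t ht, hq0 t]
    _ = K * (∫ t in a..b, q t) - m * (b - a) := by
        rw [intervalIntegral.integral_sub ((hq.intervalIntegrable a b).const_mul K)
          intervalIntegrable_const, intervalIntegral.integral_const_mul,
          intervalIntegral.integral_const, smul_eq_mul, mul_comm m]

theorem one_sub_mul_le_of_integral_le (hq0 : ∀ t, 0 ≤ q t) (hq : LocallyIntegrable q volume)
    (h : IsSolution q f y) (hf : ∀ t, 0 ≤ f t) {u v m : ℝ} (huv : u ≤ v)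
    (hmass : ∫ t in u..v, q t ≤ m) (hm : m ≤ 1) :
    ∀ t ∈ Icc u v, (1 - m) * y t ≤ max (y u) 0 := by
  obtain ⟨t₀, ht₀, hmax⟩ :=
    isCompact_Icc.exists_isMaxOn (nonempty_Icc.2 huv) h.continuous.continuousOn
  have hmass₀ : ∫ t in u..t₀, q t ≤ m :=
    (intervalIntegral.integral_mono_interval le_rfl ht₀.1 ht₀.2
      (.of_forall fun t => hq0 t) (hq.intervalIntegrable u v)).trans hmass
  have hrise := h.sub_le_of_le hq0 hq ht₀.1 (K := y t₀) (m := 0)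
    (fun t ht => hmax ⟨ht.1, ht.2.trans ht₀.2⟩) (fun t _ => hf t)
  intro t ht
  have hyt : y t ≤ y t₀ := hmax ht
  rcases le_total (y t₀) 0 with hneg | hpos
  · nlinarith [le_max_right (y u) 0]
  · nlinarith [mul_le_mul_of_nonneg_left hmass₀ hpos, le_max_left (y u) 0]

theorem le_two_pow_mul_of_integral_le (hq0 : ∀ t, 0 ≤ q t) (hq : LocallyIntegrable q volume)
    (h : IsSolution q f y) (hf : ∀ t, 0 ≤ f t) (n : ℕ) {u v : ℝ} (huv : u ≤ v)
    (hmass : ∫ t in u..v, q t ≤ n / 2) :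
    ∀ t ∈ Icc u v, y t ≤ 2 ^ n * max (y u) 0 := by
  induction n generalizing u with
  | zero =>
    intro t ht
    simpa using
      h.one_sub_mul_le_of_integral_le hq0 hq hf huv (by simpa using hmass) zero_le_one t ht
  | succ n ih =>
    have hnonneg : 0 ≤ ∫ t in u..v, q t := intervalIntegral.integral_nonneg huv fun t _ => hq0 t
    obtain ⟨s, hs, hQs⟩ : ∃ s ∈ Icc u v, ∫ t in u..s, q t = min (1 / 2) (∫ t in u..v, q t) :=
      intermediate_value_Icc huv
        (intervalIntegral.continuous_primitive hq.intervalIntegrable u).continuousOn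
        ⟨by simpa using le_min one_half_pos.le hnonneg, by simp⟩
    have hleft : ∀ t ∈ Icc u s, y t ≤ 2 * max (y u) 0 := fun t ht => by
      linarith [h.one_sub_mul_le_of_integral_le hq0 hq hf hs.1 (hQs.trans_le (min_le_left _ _))
        (by norm_num) t ht]
    have hright : ∫ t in s..v, q t ≤ n / 2 := by
      rw [← intervalIntegral.integral_interval_sub_left (hq.intervalIntegrable u v)
        (hq.intervalIntegrable u s), hQs]
      push_cast at hmass
      rcases min_cases (1 / 2 : ℝ) (∫ t in u..v, q t) with ⟨hmin, -⟩ | ⟨hmin, -⟩ <;>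
        rw [hmin] <;> linarith [(n.cast_nonneg : (0 : ℝ) ≤ n)]
    have hu : 0 ≤ max (y u) 0 := le_max_right _ _
    intro t ht
    rcases le_total t s with hts | hst
    · calc y t ≤ 2 * max (y u) 0 := hleft t ⟨ht.1, hts⟩
        _ ≤ 2 ^ (n + 1) * max (y u) 0 := by
          gcongr; exact le_self_pow₀ one_le_two n.succ_ne_zero
    · calc y t ≤ 2 ^ n * max (y s) 0 := ih hs.2 hright t ⟨hst, ht.2⟩
        _ ≤ 2 ^ n * (2 * max (y u) 0) := by
          gcongr; exact max_le (hleft s ⟨hs.1, le_rfl⟩) (by positivity)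
        _ = 2 ^ (n + 1) * max (y u) 0 := by ring

end IsSolution

theorem le_eLpNorm_of_le_abs_on_Icc {y : ℝ → ℝ} {p : ℝ≥0∞} (hp0 : p ≠ 0) (hptop : p ≠ ∞)
    {u v m : ℝ} (hm : 0 ≤ m) (h : ∀ t ∈ Icc u v, m ≤ |y t|) :
    ENNReal.ofReal m * ENNReal.ofReal (v - u) ^ (1 / p.toReal) ≤ eLpNorm y p volume := by
  have hmono : eLpNorm ((Icc u v).indicator fun _ => m) p volume ≤ eLpNorm y p volume := by
    refine eLpNorm_mono fun t => ?_
    by_cases ht : t ∈ Icc u v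
    · rw [indicator_of_mem ht, Real.norm_eq_abs, Real.norm_eq_abs, abs_of_nonneg hm]
      exact h t ht
    · simp [indicator_of_notMem ht]
  rwa [eLpNorm_indicator_const measurableSet_Icc hp0 hptop, Real.volume_Icc,
    Real.enorm_eq_ofReal hm] at hmono

theorem exists_abs_lt_of_eLpNorm_le {y : ℝ → ℝ} {p : ℝ≥0∞} (hp : 1 ≤ p) (hptop : p ≠ ∞)
    {c T u v m : ℝ} (hc : 0 ≤ c) (huv : u < v) (hT : T ≤ 4 * (v - u)) (hm : 4 * c < m)
    (hy : eLpNorm y p volume ≤ ENNReal.ofReal c * ENNReal.ofReal T ^ (1 / p.toReal)) :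
    ∃ t ∈ Icc u v, |y t| < m := by
  by_contra! hlarge
  have hp1 : 1 ≤ p.toReal := by simpa using ENNReal.toReal_mono hptop hp
  set r := 1 / p.toReal
  have hr0 : 0 ≤ r := by positivity
  have hr1 : r ≤ 1 := (div_le_one (by positivity)).2 hp1
  set X := ENNReal.ofReal (v - u) ^ r
  have hX0 : X ≠ 0 :=
    (ENNReal.rpow_pos (ENNReal.ofReal_pos.2 (sub_pos.2 huv)) ENNReal.ofReal_ne_top).ne'
  have hXtop : X ≠ ∞ := ENNReal.rpow_ne_top_of_nonneg hr0 ENNReal.ofReal_ne_top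
  have hTX : ENNReal.ofReal T ^ r ≤ ENNReal.ofReal 4 * X :=
    calc ENNReal.ofReal T ^ r ≤ ENNReal.ofReal (4 * (v - u)) ^ r := by gcongr
      _ = ENNReal.ofReal 4 ^ r * X := by
        rw [ENNReal.ofReal_mul (by norm_num), ENNReal.mul_rpow_of_nonneg _ _ hr0]
      _ ≤ ENNReal.ofReal 4 ^ (1 : ℝ) * X := by
        gcongr
        · exact ENNReal.one_le_ofReal.2 (by norm_num)
      _ = ENNReal.ofReal 4 * X := by rw [ENNReal.rpow_one]
  have hmX : ENNReal.ofReal m * X ≤ ENNReal.ofReal (4 * c) * X :=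
    calc ENNReal.ofReal m * X ≤ eLpNorm y p volume :=
          le_eLpNorm_of_le_abs_on_Icc (zero_lt_one.trans_le hp).ne' hptop (by linarith) hlarge
      _ ≤ ENNReal.ofReal c * ENNReal.ofReal T ^ r := hy
      _ ≤ ENNReal.ofReal c * (ENNReal.ofReal 4 * X) := by gcongr
      _ = ENNReal.ofReal (4 * c) * X := by
        rw [ENNReal.ofReal_mul (by norm_num), mul_left_comm, mul_assoc]
  have := (ENNReal.ofReal_le_ofReal_iff (by positivity)).1
    ((ENNReal.mul_le_mul_iff_left hX0 hXtop).1 hmX)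
  linarith

theorem two_le_integral_of_isSolution_indicator {q y : ℝ → ℝ} {p : ℝ≥0∞} (hp : 1 ≤ p)
    (hptop : p ≠ ∞) (hq0 : ∀ t, 0 ≤ q t) (hq : LocallyIntegrable q volume) {c x A : ℝ}
    (hc : 0 < c) (hA : 240 * c ≤ A)
    (hsol : IsSolution q ((Icc (x - A) (x + A)).indicator fun _ => 1) y)
    (hy : eLpNorm y p volume ≤ ENNReal.ofReal c * ENNReal.ofReal (2 * A) ^ (1 / p.toReal)) :
    2 ≤ ∫ t in x - A..x + A, q t := by
  by_contra! hlt
  obtain ⟨a, ha, hya⟩ := exists_abs_lt_of_eLpNorm_le hp hptop hc.le (u := x - A) (v := x - A / 2)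
    (by linarith) (by linarith) (by linarith : 4 * c < 5 * c) hy
  have hmass : ∀ b ∈ Icc a (x + A), ∫ t in a..b, q t ≤ 2 := fun b hb =>
    (intervalIntegral.integral_mono_interval ha.1 hb.1 hb.2 (.of_forall fun t => hq0 t)
      (hq.intervalIntegrable _ _)).trans hlt.le
  have hupper : ∀ t ∈ Icc a (x + A), y t ≤ 80 * c := fun t ht => by
    have hya' : max (y a) 0 ≤ 5 * c := max_le ((le_abs_self _).trans hya.le) (by positivity)
    have := hsol.le_two_pow_mul_of_integral_le hq0 hq
      (fun t => indicator_nonneg (fun _ _ => zero_le_one) t) 4 (by linarith [ha.2])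
      ((hmass _ ⟨by linarith [ha.2], le_rfl⟩).trans (by norm_num)) t ht
    linarith
  have hlower : ∀ b ∈ Icc (x + A / 4) (x + A), 5 * c ≤ |y b| := by
    intro b hb
    have hab : a ≤ b := by linarith [ha.2, hb.1]
    have hdrop := hsol.sub_le_of_le hq0 hq hab (fun t ht => hupper t ⟨ht.1, ht.2.trans hb.2⟩)
      (m := 1) fun t ht => by
        rw [indicator_of_mem (show t ∈ Icc (x - A) (x + A) from
          ⟨by linarith [ha.1, ht.1], by linarith [ht.2, hb.2]⟩)]
    have hmass_b :=
      mul_le_mul_of_nonneg_left (hmass b ⟨hab, hb.2⟩) (by positivity : 0 ≤ 80 * c)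
    linarith [neg_abs_le (y b), le_abs_self (y a), hb.1, ha.2]
  obtain ⟨b, hb, hyb⟩ := exists_abs_lt_of_eLpNorm_le hp hptop hc.le (u := x + A / 4) (v := x + A)
    (by linarith) (by linarith) (by linarith : 4 * c < 5 * c) hy
  linarith [hlower b hb]

theorem dq_le_of_two_le_integral {q : ℝ → ℝ} (hq : LocallyIntegrable q volume) {x R : ℝ}
    (hR : 0 ≤ R) (h : 2 ≤ ∫ t in x - R..x + R, q t) : dq q x ≤ R := by
  have hcont : Continuous fun d => ∫ t in x - d..x + d, q t := by
    have hF := intervalIntegral.continuous_primitive hq.intervalIntegrable 0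
    refine ((hF.comp (continuous_const_add x)).sub
      (hF.comp (continuous_sub_left x))).congr fun d => ?_
    exact intervalIntegral.integral_interval_sub_left (hq.intervalIntegrable _ _)
      (hq.intervalIntegrable _ _)
  obtain ⟨d, hd, hd2⟩ := intermediate_value_Icc hR hcont.continuousOn
    (show (2 : ℝ) ∈ Icc (∫ t in x - 0..x + 0, q t) (∫ t in x - R..x + R, q t) from
      ⟨by simp, h⟩)
  have hd0 : 0 < d := hd.1.lt_of_ne (by rintro rfl; simp at hd2)
  exact (csInf_le ⟨0, fun _ hd => hd.1.le⟩
    (show d ∈ {d : ℝ | 0 < d ∧ ∫ t in x - d..x + d, q t = 2} from ⟨hd0, hd2⟩)).trans hd.2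

theorem stmt7 (q : ℝ → ℝ) (hq : ∀ x, 0 ≤ q x)
    (hqloc : LocallyIntegrable q volume)
    (p : ℝ≥0∞) (hp : 1 ≤ p) (hptop : p ≠ ∞)
    (hsolv : CorrectlySolvableLp q p) :
    BddAbove (Set.range (dq q)) := by
  obtain ⟨c, hc, hsolv⟩ := hsolv
  refine ⟨240 * c, forall_mem_range.2 fun x =>
    dq_le_of_two_le_integral hqloc (by positivity) ?_⟩
  set f := (Icc (x - 240 * c) (x + 240 * c)).indicator fun _ => (1 : ℝ)
  have hf : MemLp f p volume :=
    memLp_indicator_const p measurableSet_Icc _ (.inr (by simp [Real.volume_Icc]))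
  obtain ⟨⟨y, ⟨hy, hyLp⟩, -⟩, hbound⟩ := hsolv f hf
  refine two_le_integral_of_isSolution_indicator hp hptop hq hqloc hc le_rfl hy ?_
  calc eLpNorm y p volume ≤ ENNReal.ofReal c * eLpNorm f p volume := hbound y hy hyLp
    _ = ENNReal.ofReal c * ENNReal.ofReal (2 * (240 * c)) ^ (1 / p.toReal) := by
      rw [eLpNorm_indicator_const measurableSet_Icc (zero_lt_one.trans_le hp).ne' hptop,
        Real.volume_Icc]
      ring_nf
      simp
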